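/- Let $D$ be a diagram with row-composition $\lambda$ and conjugate partition $\lambda' = (\lambda_1', \ldots, \lambda_{r'}')$. For $1 \le u \le r'$, any $u$-path in $D$ of length $\lambda_1' + \cdots + \lambda_u'$ contains all $\lambda_i$ nodes on the $i$-th row of $D$ whenever $\lambda_i \le u$, and exactly $u$ nodes on each row with $\lambda_i > u$. -/

import Mathlib

/-- `Prec A B` : for all `(a₁,b₁) ∈ A`, `(a₂,b₂) ∈ B` with `a₁ ≤ a₂`, `b₁ < b₂`. -/
def Prec (A B : Set (ℕ × ℕ)) : Prop :=
  ∀ p ∈ A, ∀ q ∈ B, p.1 ≤ q.1 → p.2 < q.2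

/-- A path in a diagram `D`: a nonempty sequence of nodes of `D`,
strictly increasing in row index and weakly increasing in column index. -/
def IsPath (D : Finset (ℕ × ℕ)) (π : List (ℕ × ℕ)) : Prop :=
  π ≠ [] ∧ (∀ p ∈ π, p ∈ D) ∧ π.Chain' (fun p q => p.1 < q.1 ∧ p.2 ≤ q.2)

/-- A `k`-path: a sequence of pairwise disjoint paths in `D`. -/
def IsKPath (D : Finset (ℕ × ℕ)) (P : List (List (ℕ × ℕ))) : Prop :=
  (∀ π ∈ P, IsPath D π) ∧ P.Pairwise (fun π ρ => ∀ p ∈ π, p ∉ ρ)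

/-- The support of a path, as a set of nodes. -/
def supp (π : List (ℕ × ℕ)) : Set (ℕ × ℕ) := {p | p ∈ π}

/-- An ordered `k`-path: the supports of the constituent paths are
successively related by `≺`. -/
def IsOrderedKPath (D : Finset (ℕ × ℕ)) (P : List (List (ℕ × ℕ))) : Prop :=
  IsKPath D P ∧ P.Pairwise (fun π ρ => Prec (supp π) (supp ρ))

/-- Number of nodes on row `i` of `D` (the part `λ_i` of the row-composition). -/
def rowCount (D : Finset (ℕ × ℕ)) (i : ℕ) : ℕ :=
  (D.filter (fun q => q.1 = i)).card

/-- The `j`-th part `λ'_j` of the conjugate of the row-composition of `D`: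
the number of rows of `D` having at least `j` nodes. -/
def conjRow (D : Finset (ℕ × ℕ)) (j : ℕ) : ℕ :=
  ((D.image Prod.fst).filter (fun i => j ≤ rowCount D i)).card

/-!
A path visits each row at most once, so a `u`-path meets row `i` in at most `min λ_i u` nodes.
Counting the rows of height at least `j` for `j = 1, …, u` gives
`λ'_1 + ⋯ + λ'_u = ∑_i min λ_i u`, so a `u`-path of that length attains every one of these
row bounds.
-/

open Finset

namespace IsPath

variable {D : Finset (ℕ × ℕ)} {π : List (ℕ × ℕ)}

theorem nodup_map_fst (h : IsPath D π) : (π.map Prod.fst).Nodup := by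
  have hchain : (π.map Prod.fst).IsChain (· < ·) :=
    (List.isChain_map _).2 (h.2.2.imp fun _ _ hpq => hpq.1)
  exact hchain.pairwise.nodup

theorem nodup (h : IsPath D π) : π.Nodup :=
  h.nodup_map_fst.of_map _

theorem countP_fst_eq_le_one (h : IsPath D π) (i : ℕ) : π.countP (·.1 = i) ≤ 1 := by
  have := List.nodup_iff_count_le_one.1 h.nodup_map_fst i
  rwa [List.count_eq_countP, List.countP_map] at this

end IsPath

namespace IsKPath

variable {D : Finset (ℕ × ℕ)} {P : List (List (ℕ × ℕ))}

theorem nodup_flatten (h : IsKPath D P) : P.flatten.Nodup :=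
  List.nodup_flatten.2 ⟨fun π hπ => (h.1 π hπ).nodup, h.2⟩

theorem toFinset_flatten_subset (h : IsKPath D P) : P.flatten.toFinset ⊆ D := by
  intro p hp
  obtain ⟨π, hπ, hpπ⟩ := List.mem_flatten.1 (List.mem_toFinset.1 hp)
  exact (h.1 π hπ).2.1 p hpπ

theorem card_filter_fst_eq_le_length (h : IsKPath D P) (i : ℕ) :
    (P.flatten.toFinset.filter (·.1 = i)).card ≤ P.length := by
  have hfilter : P.flatten.toFinset.filter (·.1 = i) = (P.flatten.filter (·.1 = i)).toFinset := by
    ext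
    simp only [mem_filter, List.mem_toFinset, List.mem_filter, decide_eq_true_eq]
  rw [hfilter, List.toFinset_card_of_nodup (h.nodup_flatten.filter _),
    ← List.countP_eq_length_filter, List.countP_flatten]
  calc (P.map (List.countP (·.1 = i))).sum
      ≤ (P.map (List.countP (·.1 = i))).length • 1 :=
        List.sum_le_card_nsmul _ _ <| by
          simpa using fun π hπ => (h.1 π hπ).countP_fst_eq_le_one i
    _ = P.length := by simp

theorem card_filter_fst_eq_le_min (h : IsKPath D P) (i : ℕ) :
    (P.flatten.toFinset.filter (·.1 = i)).card ≤ min (rowCount D i) P.length :=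
  le_min (card_le_card (filter_subset_filter _ h.toFinset_flatten_subset))
    (h.card_filter_fst_eq_le_length i)

end IsKPath

theorem sum_conjRow_eq_sum_min (D : Finset (ℕ × ℕ)) (u : ℕ) :
    ∑ j ∈ Icc 1 u, conjRow D j = ∑ i ∈ D.image Prod.fst, min (rowCount D i) u := by
  simp only [conjRow, card_filter]
  rw [sum_comm]
  refine sum_congr rfl fun i _ => ?_
  rw [← card_filter]
  have hIcc : (Icc 1 u).filter (· ≤ rowCount D i) = Icc 1 (min (rowCount D i) u) := by
    ext j
    simp only [mem_filter, mem_Icc]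
    omega
  rw [hIcc, Nat.card_Icc, Nat.add_sub_cancel]

theorem IsKPath.card_filter_fst_eq_min {D : Finset (ℕ × ℕ)} {P : List (List (ℕ × ℕ))}
    (hP : IsKPath D P)
    (htot : P.flatten.length = ∑ j ∈ Icc 1 P.length, conjRow D j) :
    ∀ i ∈ D.image Prod.fst,
      (P.flatten.toFinset.filter (·.1 = i)).card = min (rowCount D i) P.length := by
  have hrows : ∑ i ∈ D.image Prod.fst, (P.flatten.toFinset.filter (·.1 = i)).card
      = P.flatten.toFinset.card :=
    (card_eq_sum_card_fiberwise fun p hp =>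
      mem_image_of_mem _ (hP.toFinset_flatten_subset hp)).symm
  rw [← sum_eq_sum_iff_of_le fun i _ => hP.card_filter_fst_eq_le_min i, hrows,
    List.toFinset_card_of_nodup hP.nodup_flatten, htot, sum_conjRow_eq_sum_min]

theorem stmt_15_general (D : Finset (ℕ × ℕ)) (u : ℕ)
    (P : List (List (ℕ × ℕ))) (hP : IsKPath D P) (hlen : P.length = u)
    (htot : P.flatten.length = ∑ j ∈ Finset.Icc 1 u, conjRow D j) :
    ∀ i ∈ D.image Prod.fst,
      (rowCount D i ≤ u → ∀ p ∈ D, p.1 = i → p ∈ P.flatten) ∧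
      (u < rowCount D i → (P.flatten.toFinset.filter (fun p => p.1 = i)).card = u) := by
  subst hlen
  intro i hi
  have hrow := hP.card_filter_fst_eq_min htot i hi
  refine ⟨fun hle p hpD hpi => ?_, fun hlt => by omega⟩
  have hfull : P.flatten.toFinset.filter (·.1 = i) = D.filter (·.1 = i) :=
    eq_of_subset_of_card_le (filter_subset_filter _ hP.toFinset_flatten_subset)
      (by rw [hrow, min_eq_left hle]; rfl)
  have hp : p ∈ P.flatten.toFinset.filter (·.1 = i) := hfull ▸ mem_filter.2 ⟨hpD, hpi⟩
  exact List.mem_toFinset.1 (mem_filter.1 hp).1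

/-- Result 2.6 (Proposition 3.4 of [MPa17]): a `u`-path in `D` of length
`λ'_1 + ⋯ + λ'_u` contains all `λ_i` nodes on each row `i` with `λ_i ≤ u`, and
exactly `u` nodes on each row with `λ_i > u`. -/
theorem stmt_15 (D : Finset (ℕ × ℕ)) (u : ℕ) (hu : 1 ≤ u)
    (hur : u ≤ (D.image Prod.fst).sup (rowCount D))
    (P : List (List (ℕ × ℕ))) (hP : IsKPath D P) (hlen : P.length = u)
    (htot : P.flatten.length = ∑ j ∈ Finset.Icc 1 u, conjRow D j) :
    ∀ i ∈ D.image Prod.fst,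
      (rowCount D i ≤ u → ∀ p ∈ D, p.1 = i → p ∈ P.flatten) ∧
      (u < rowCount D i → (P.flatten.toFinset.filter (fun p => p.1 = i)).card = u) :=
  stmt_15_general D u P hP hlen htot
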